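/- arXiv:1408.1431 — 7 statements merged into one kernel-verified Lean document; each statement's English description precedes it below -/
import Mathlib

section
/- Let V be a finite set of even cardinality n ≥ 2 and let G be the complete directed graph on V with edge weights w : E → {0,1}. Then for every Hamiltonian cycle T of G there exists a perfect matching M of G with w(M) ≥ w(T)/2. In particular, the maximum weight of a perfect matching of G is at least OPT/2, where OPT is the maximum weight of a Hamiltonian cycle. -/
open Finset

/-- `T` is a Hamiltonian cycle (tour) of the complete directed graph on `V`:
a set of directed edges forming a single directed cycle visiting every vertex
exactly once, encoded via a cyclic permutation of the whole vertex set. -/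
def IsHamCycle {V : Type*} [Fintype V] [DecidableEq V] (T : Finset (V × V)) : Prop :=
  ∃ σ : Equiv.Perm V, σ.IsCycle ∧ σ.support = Finset.univ ∧
    T = Finset.univ.image (fun v => (v, σ v))

/-- `M` is a matching of the complete directed graph on `V`: a set of directed
edges (with distinct endpoints) that are pairwise vertex-disjoint. -/
def IsMatching {V : Type*} (M : Finset (V × V)) : Prop :=
  (∀ e ∈ M, e.1 ≠ e.2) ∧
  ∀ e ∈ M, ∀ f ∈ M, e ≠ f →
    e.1 ≠ f.1 ∧ e.1 ≠ f.2 ∧ e.2 ≠ f.1 ∧ e.2 ≠ f.2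

/-- A perfect matching: a matching in which every vertex is an endpoint of an
edge (and hence, by disjointness, of exactly one edge). -/
def IsPerfectMatching {V : Type*} (M : Finset (V × V)) : Prop :=
  IsMatching M ∧ ∀ v : V, ∃ e ∈ M, v = e.1 ∨ v = e.2

section Aux
variable {V : Type*} [Fintype V] [DecidableEq V]

lemma key_lemma (n : ℕ) (hn : Fintype.card V = n) (hpar : Even n) (h2 : 2 ≤ n)
    (w : V × V → ℕ) (T : Finset (V × V)) (hT : IsHamCycle T) :
    ∃ M : Finset (V × V), IsPerfectMatching M ∧ ∑ e ∈ T, w e ≤ 2 * ∑ e ∈ M, w e := by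
  obtain ⟨σ, hcyc, hsupp, rfl⟩ := hT
  have hn0 : n ≠ 0 := by omega
  haveI : NeZero n := ⟨hn0⟩
  haveI : Fact (1 < n) := ⟨by omega⟩
  have hordV : orderOf σ = n := by
    rw [hcyc.orderOf, hsupp, Finset.card_univ, hn]
  obtain ⟨x⟩ : Nonempty V := Fintype.card_pos_iff.mp (by omega)
  have hfix : ∀ v : V, σ v ≠ v := fun v =>
    Equiv.Perm.mem_support.mp (hsupp ▸ Finset.mem_univ v)
  set e : ZMod n → V := fun k => (σ ^ k.val) x with he
  have hp : ∀ a : ℕ, σ ^ (a % n) = σ ^ a := by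
    intro a; rw [← hordV]; exact pow_mod_orderOf σ a
  have hsurj : Function.Surjective e := by
    intro y
    rcases hcyc.exists_pow_eq (hfix x) (hfix y) with ⟨i, hi⟩
    refine ⟨(i : ZMod n), ?_⟩
    simp only [he, ZMod.val_natCast]
    rw [hp]
    exact hi
  have hinj : Function.Injective e :=
    ((Fintype.bijective_iff_surjective_and_card e).mpr
      ⟨hsurj, by simp [ZMod.card, hn]⟩).1
  have hstep : ∀ k : ZMod n, σ (e k) = e (k + 1) := by
    intro k
    show σ ((σ ^ k.val) x) = (σ ^ (k + 1).val) x
    have hv : (k + 1).val = (k.val + 1) % n := by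
      rw [ZMod.val_add, ZMod.val_one]
    rw [hv, hp, pow_succ', Equiv.Perm.mul_apply]
  have h2dvd : 2 ∣ n := hpar.two_dvd
  have hflip : ∀ k : ZMod n, (k + 1).val % 2 = 1 - k.val % 2 := by
    intro k
    have hv : (k + 1).val = (k.val + 1) % n := by
      rw [ZMod.val_add, ZMod.val_one]
    rw [hv, Nat.mod_mod_of_dvd _ h2dvd]
    omega
  set f : ZMod n → V × V := fun k => (e k, e (k + 1)) with hf
  have hfinj : Function.Injective f := fun a b hab => hinj (congrArg Prod.fst hab)
  have himg : Finset.univ.image (fun v => (v, σ v)) = Finset.univ.image f := by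
    have h1 : (Finset.univ : Finset V) = Finset.univ.image e :=
      (Finset.image_univ_of_surjective hsurj).symm
    rw [h1, Finset.image_image]
    apply Finset.image_congr
    intro k _
    simp only [Function.comp_apply, hf]
    rw [hstep k]
  have hTsum : ∑ p ∈ Finset.univ.image (fun v => (v, σ v)), w p = ∑ k : ZMod n, w (f k) := by
    rw [himg, Finset.sum_image (fun a _ b _ h => hfinj h)]
  set S : ℕ → Finset (ZMod n) := fun i => Finset.univ.filter (fun k => k.val % 2 = i) with hS
  have hMsum : ∀ i, ∑ p ∈ (S i).image f, w p = ∑ k ∈ S i, w (f k) :=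
    fun i => Finset.sum_image (fun a _ b _ h => hfinj h)
  have hpm : ∀ i : ℕ, i < 2 → IsPerfectMatching ((S i).image f) := by
    intro i hi
    refine ⟨⟨?_, ?_⟩, ?_⟩
    · rintro p hp
      obtain ⟨k, _, rfl⟩ := Finset.mem_image.mp hp
      intro h
      have hk : k = k + 1 := hinj h
      have : (1 : ZMod n) = 0 := (left_eq_add.mp hk)
      exact one_ne_zero this
    · rintro p hp q hq hne
      obtain ⟨a, ha, rfl⟩ := Finset.mem_image.mp hp
      obtain ⟨b, hb, rfl⟩ := Finset.mem_image.mp hq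
      simp only [hS, Finset.mem_filter] at ha hb
      have hab : a ≠ b := fun h => hne (by rw [h])
      have hfa := hflip a
      have hfb := hflip b
      refine ⟨fun h => hab (hinj h), ?_, ?_, fun h => hab (add_right_cancel (hinj h))⟩
      · intro h
        have hh : a = b + 1 := hinj h
        have : a.val % 2 = (b + 1).val % 2 := by rw [hh]
        omega
      · intro h
        have hh : a + 1 = b := hinj h
        have : (a + 1).val % 2 = b.val % 2 := by rw [hh]
        omega
    · intro v
      obtain ⟨m, rfl⟩ := hsurj v
      by_cases hm : m.val % 2 = i
      · exact ⟨f m, Finset.mem_image_of_mem f (Finset.mem_filter.mpr ⟨Finset.mem_univ m, hm⟩),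
          Or.inl rfl⟩
      · have hmv : m.val % 2 < 2 := Nat.mod_lt _ two_pos
        have h1 := hflip (m - 1)
        rw [sub_add_cancel] at h1
        refine ⟨f (m - 1), Finset.mem_image_of_mem f (Finset.mem_filter.mpr
          ⟨Finset.mem_univ _, ?_⟩), Or.inr ?_⟩
        · have : (m - 1).val % 2 < 2 := Nat.mod_lt _ two_pos
          omega
        · show e m = (e (m - 1), e (m - 1 + 1)).2
          rw [sub_add_cancel]
  have hsplit : ∑ k : ZMod n, w (f k) = ∑ k ∈ S 0, w (f k) + ∑ k ∈ S 1, w (f k) := by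
    rw [← Finset.sum_filter_add_sum_filter_not Finset.univ (fun k => k.val % 2 = 0)]
    congr 1
    apply Finset.sum_congr _ (fun _ _ => rfl)
    ext k
    simp only [hS, Finset.mem_filter, Finset.mem_univ, true_and]
    omega
  rcases le_total (∑ k ∈ S 1, w (f k)) (∑ k ∈ S 0, w (f k)) with h | h
  · exact ⟨(S 0).image f, hpm 0 (by norm_num), by rw [hTsum, hsplit, hMsum 0]; omega⟩
  · exact ⟨(S 1).image f, hpm 1 (by norm_num), by rw [hTsum, hsplit, hMsum 1]; omega⟩

lemma exists_ham (n : ℕ) (hn : Fintype.card V = n) (h2 : 2 ≤ n) :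
    ∃ T : Finset (V × V), IsHamCycle T := by
  obtain ⟨m, rfl⟩ : ∃ m, n = m + 2 := ⟨n - 2, by omega⟩
  let ε : V ≃ Fin (m + 2) := Fintype.equivFinOfCardEq hn
  set τ : Equiv.Perm (Fin (m + 2)) := finRotate (m + 2) with hτ
  set σ : Equiv.Perm V := (ε.trans τ).trans ε.symm with hσd
  have hσ : ∀ v, σ v = ε.symm (τ (ε v)) := fun v => rfl
  have hfixτ : ∀ a : Fin (m + 2), τ a ≠ a := fun a =>
    Equiv.Perm.mem_support.mp (support_finRotate ▸ Finset.mem_univ a)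
  have hfix : ∀ v, σ v ≠ v := by
    intro v h
    apply hfixτ (ε v)
    have := congrArg ε h
    simpa [hσ] using this
  have hpow : ∀ (i : ℕ) (v : V), (σ ^ i) v = ε.symm ((τ ^ i) (ε v)) := by
    intro i
    induction i with
    | zero => intro v; simp
    | succ i ih =>
      intro v
      rw [pow_succ, pow_succ, Equiv.Perm.mul_apply, Equiv.Perm.mul_apply, ih, hσ]
      simp
  have hcyc : σ.IsCycle := by
    obtain ⟨v⟩ : Nonempty V := Fintype.card_pos_iff.mp (by omega)
    refine ⟨v, hfix v, ?_⟩
    intro y hy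
    obtain ⟨i, hi⟩ := isCycle_finRotate.exists_pow_eq (hfixτ (ε v)) (hfixτ (ε y))
    refine ⟨(i : ℤ), ?_⟩
    rw [zpow_natCast, hpow i v, hτ, hi]
    simp
  have hsupp : σ.support = Finset.univ :=
    Finset.eq_univ_iff_forall.mpr (fun v => Equiv.Perm.mem_support.mpr (hfix v))
  exact ⟨_, σ, hcyc, hsupp, rfl⟩

end Aux

/-- Let `V` be a finite set of even cardinality `n ≥ 2` and consider the complete
directed graph on `V` with edge weights `w : E → {0,1}`. Then for every Hamiltonian
cycle `T` there is a perfect matching `M` with `w(M) ≥ w(T)/2`; in particular the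
maximum weight of a perfect matching is at least `OPT/2`. -/
theorem stmt0 {V : Type*} [Fintype V] [DecidableEq V] (n : ℕ)
    (hn : Fintype.card V = n) (hpar : Even n) (h2 : 2 ≤ n)
    (w : V × V → ℕ) (hw : ∀ e : V × V, w e ≤ 1) :
    (∀ T : Finset (V × V), IsHamCycle T →
      ∃ M : Finset (V × V), IsPerfectMatching M ∧
        ∑ e ∈ T, w e ≤ 2 * ∑ e ∈ M, w e) ∧
    (∃ M : Finset (V × V), IsPerfectMatching M ∧
      ∀ T : Finset (V × V), IsHamCycle T →
        ∑ e ∈ T, w e ≤ 2 * ∑ e ∈ M, w e) := by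
  classical
  refine ⟨fun T hT => key_lemma n hn hpar h2 w T hT, ?_⟩
  obtain ⟨T0, hT0⟩ := exists_ham n hn h2
  have hne : (Finset.univ.filter (fun T : Finset (V × V) => IsHamCycle T)).Nonempty :=
    ⟨T0, by simp [hT0]⟩
  obtain ⟨T1, hT1mem, hT1max⟩ :=
    Finset.exists_max_image _ (fun T : Finset (V × V) => ∑ e ∈ T, w e) hne
  have hT1 : IsHamCycle T1 := (Finset.mem_filter.mp hT1mem).2
  obtain ⟨M, hM, hMle⟩ := key_lemma n hn hpar h2 w T1 hT1
  refine ⟨M, hM, fun T hT => ?_⟩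
  exact le_trans (hT1max T (by simp [hT])) hMle
end

section
/- Let G be the complete directed graph on V with weights w : E → {0,1} and let M be a matching of G. Construct the undirected weighted graph G' = (V',E') as follows: for each v ∈ V add vertices v_in, v_out; for each directed edge (u,v) of G add vertices e¹_uv, e²_uv, an edge {e¹_uv, e²_uv} of weight 0, and edges {u_out, e¹_uv} and {v_in, e²_uv}, each of weight w(u,v)/2; for each M-hit 2-cycle on vertices u,v add vertices a_{u,v}, b_{u,v} and weight-0 edges {a_{u,v}, e¹_uv}, {a_{u,v}, e²_vu}, {b_{u,v}, e¹_vu}, {b_{u,v}, e²_uv}. Then: (1) for every perfect matching N of G', the set C̃(N) of edges/half-edges of G̃ defined by including the half-edge (u, x_{(u,v)}) exactly when {u_out, e¹_uv} ∈ N and the half-edge (x_{(u,v)}, v) exactly when {v_in, e²_uv} ∈ N (and, for edges (u,v) not split in G̃, including the whole edge (u,v) exactly when both {u_out, e¹_uv} ∈ N and {v_in, e²_uv} ∈ N) is a cycle cover that evades M, and w(C̃(N)) = w(N); (2) if N is a maximum weight perfect matching of G', then w(C̃(N)) ≥ OPT, where OPT is the maximum weight of a Hamiltonian cycle of G (assuming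 |V| ≥ 3). -/
open Finset

/-- The 2-cycle on `u, v` is `M`-hit: both its edges have weight 1 and one of
them belongs to `M`.  (Both edges of an `M`-hit 2-cycle are split in `G̃`.) -/
def MHit {V : Type*} (w : V × V → ℕ) (M : Finset (V × V)) (u v : V) : Prop :=
  u ≠ v ∧ w (u, v) = 1 ∧ w (v, u) = 1 ∧ ((u, v) ∈ M ∨ (v, u) ∈ M)

instance {V : Type*} [DecidableEq V] (w : V × V → ℕ) (M : Finset (V × V)) (u v : V) :
    Decidable (MHit w M u v) := by unfold MHit; infer_instance

/-- Vertices of the auxiliary undirected graph `G'`: `vin v = v_in`,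
`vout v = v_out`, `e1 u v = e¹_uv`, `e2 u v = e²_uv`, and for each `M`-hit
2-cycle, gadget vertices `ga u v = a_{u,v}` and `gb u v = b_{u,v}` indexed by the
edge `(u,v)` of `M` in the 2-cycle. -/
inductive GPVert (V : Type*) where
  | vin : V → GPVert V
  | vout : V → GPVert V
  | e1 : V → V → GPVert V
  | e2 : V → V → GPVert V
  | ga : V → V → GPVert V
  | gb : V → V → GPVert V
  deriving DecidableEq, Fintype

/-- The genuine vertices of `G'` (the other terms of `GPVert V` are unused). -/
def Genuine {V : Type*} (w : V × V → ℕ) (M : Finset (V × V)) : GPVert V → Prop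
  | .vin _ => True
  | .vout _ => True
  | .e1 u v => u ≠ v
  | .e2 u v => u ≠ v
  | .ga u v => (u, v) ∈ M ∧ MHit w M u v
  | .gb u v => (u, v) ∈ M ∧ MHit w M u v

instance {V : Type*} [DecidableEq V] (w : V × V → ℕ) (M : Finset (V × V)) :
    DecidablePred (Genuine (V := V) w M) := fun x => by
  cases x <;> simp only [Genuine] <;> infer_instance

/-- The edges of `G'` (one orientation each): for every edge `(u,v)` of `G` the
edge `{e¹_uv, e²_uv}` and the edges `{u_out, e¹_uv}`, `{v_in, e²_uv}`, and for
every `M`-hit 2-cycle (with `(u,v) ∈ M`) the four gadget edges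
`{a_{u,v}, e¹_uv}`, `{a_{u,v}, e²_vu}`, `{b_{u,v}, e¹_vu}`, `{b_{u,v}, e²_uv}`. -/
inductive GPAdjBase {V : Type*} (w : V × V → ℕ) (M : Finset (V × V)) :
    GPVert V → GPVert V → Prop where
  | mid (u v : V) (h : u ≠ v) : GPAdjBase w M (.e1 u v) (.e2 u v)
  | outE (u v : V) (h : u ≠ v) : GPAdjBase w M (.vout u) (.e1 u v)
  | inE (u v : V) (h : u ≠ v) : GPAdjBase w M (.vin v) (.e2 u v)
  | ga1 (u v : V) (hm : (u, v) ∈ M) (hh : MHit w M u v) :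
      GPAdjBase w M (.ga u v) (.e1 u v)
  | ga2 (u v : V) (hm : (u, v) ∈ M) (hh : MHit w M u v) :
      GPAdjBase w M (.ga u v) (.e2 v u)
  | gb1 (u v : V) (hm : (u, v) ∈ M) (hh : MHit w M u v) :
      GPAdjBase w M (.gb u v) (.e1 v u)
  | gb2 (u v : V) (hm : (u, v) ∈ M) (hh : MHit w M u v) :
      GPAdjBase w M (.gb u v) (.e2 u v)

/-- Undirected adjacency in `G'`. -/
def GPAdj {V : Type*} (w : V × V → ℕ) (M : Finset (V × V)) (x y : GPVert V) : Prop :=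
  GPAdjBase w M x y ∨ GPAdjBase w M y x

/-- A perfect matching of `G'`, encoded as an involution `f` without fixed points
on the genuine vertices, matching each genuine vertex to an adjacent vertex. -/
def IsPMofGP {V : Type*} (w : V × V → ℕ) (M : Finset (V × V))
    (f : GPVert V → GPVert V) : Prop :=
  ∀ x : GPVert V, Genuine w M x → f (f x) = x ∧ GPAdj w M x (f x)

/-- The weight of an edge of `G'`: the edges `{u_out, e¹_uv}` and `{v_in, e²_uv}`
have weight `w(u,v)/2`, all other edges weight `0`. -/
def gpw {V : Type*} [DecidableEq V] (w : V × V → ℕ) : GPVert V → GPVert V → ℚ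
  | .vout u, .e1 u' v => if u = u' then (w (u', v) : ℚ) / 2 else 0
  | .e1 u' v, .vout u => if u = u' then (w (u', v) : ℚ) / 2 else 0
  | .vin v, .e2 u v' => if v = v' then (w (u, v') : ℚ) / 2 else 0
  | .e2 u v', .vin v => if v = v' then (w (u, v') : ℚ) / 2 else 0
  | _, _ => 0

/-- The weight `w(N)` of the perfect matching of `G'` encoded by `f` (each matched
pair is seen from both of its endpoints, whence the division by `2`). -/
def pmWeight {V : Type*} [Fintype V] [DecidableEq V] (w : V × V → ℕ)
    (M : Finset (V × V)) (f : GPVert V → GPVert V) : ℚ :=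
  (∑ x : GPVert V, if Genuine w M x then gpw w x (f x) else 0) / 2

/-- The edges of `G̃`: `whole u v` is an unsplit edge `(u,v)`; `half1 u v` is the
half-edge `(u, x_{(u,v)})` and `half2 u v` the half-edge `(x_{(u,v)}, v)` of a
split edge `(u,v)`. -/
inductive TilE (V : Type*) where
  | whole : V → V → TilE V
  | half1 : V → V → TilE V
  | half2 : V → V → TilE V
  deriving DecidableEq, Fintype

/-- Weight of an edge of `G̃`: a whole edge has weight `w(u,v)`, each half-edge of
`(u,v)` has weight `w(u,v)/2`. -/
def tilw {V : Type*} (w : V × V → ℕ) : TilE V → ℚ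
  | .whole u v => (w (u, v) : ℚ)
  | .half1 u v => (w (u, v) : ℚ) / 2
  | .half2 u v => (w (u, v) : ℚ) / 2

/-- The edge of `G̃` is outgoing at the original vertex `x ∈ V`. -/
def tilOutAt {V : Type*} (x : V) : TilE V → Prop
  | .whole u _ => u = x
  | .half1 u _ => u = x
  | .half2 _ _ => False

/-- The edge of `G̃` is incoming at the original vertex `x ∈ V`. -/
def tilInAt {V : Type*} (x : V) : TilE V → Prop
  | .whole _ v => v = x
  | .half1 _ _ => False
  | .half2 _ v => v = x

instance {V : Type*} [DecidableEq V] (x : V) : DecidablePred (tilOutAt (V := V) x) :=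
  fun e => by cases e <;> simp only [tilOutAt] <;> infer_instance

instance {V : Type*} [DecidableEq V] (x : V) : DecidablePred (tilInAt (V := V) x) :=
  fun e => by cases e <;> simp only [tilInAt] <;> infer_instance

/-- The edge actually belongs to `G̃`: whole edges are exactly the unsplit edges
(`u ≠ v`, not in an `M`-hit 2-cycle), half-edges exist exactly for split edges. -/
def TilValid {V : Type*} (w : V × V → ℕ) (M : Finset (V × V)) : TilE V → Prop
  | .whole u v => u ≠ v ∧ ¬ MHit w M u v
  | .half1 u v => MHit w M u v
  | .half2 u v => MHit w M u v

/-- `C` is a cycle cover that evades the matching `M` (Definition 1 of the paper):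
(i) every original vertex has exactly one outgoing and one incoming edge of `C`;
(ii) for every `M`-hit 2-cycle on `u, v`, `C` contains zero or two edges among the
four half-edges on `u, v`; moreover if `C` contains only one half-edge of `(u,v)`
then it contains exactly one half-edge of `(v,u)`, one of the two being incident
with `u` and the other with `v`. -/
def IsEvadingCC {V : Type*} [Fintype V] [DecidableEq V] (w : V × V → ℕ)
    (M : Finset (V × V)) (C : Finset (TilE V)) : Prop :=
  (∀ e ∈ C, TilValid w M e) ∧
  (∀ x : V, (C.filter fun e => tilOutAt x e).card = 1 ∧
            (C.filter fun e => tilInAt x e).card = 1) ∧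
  ∀ u v : V, MHit w M u v →
    ((({TilE.half1 u v, TilE.half2 u v, TilE.half1 v u, TilE.half2 v u} : Finset (TilE V))
        ∩ C).card = 0 ∨
     (({TilE.half1 u v, TilE.half2 u v, TilE.half1 v u, TilE.half2 v u} : Finset (TilE V))
        ∩ C).card = 2) ∧
    (TilE.half1 u v ∈ C ∧ TilE.half2 u v ∉ C →
      TilE.half1 v u ∈ C ∧ TilE.half2 v u ∉ C) ∧
    (TilE.half2 u v ∈ C ∧ TilE.half1 u v ∉ C →
      TilE.half2 v u ∈ C ∧ TilE.half1 v u ∉ C)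

/-- Membership of an edge of `G̃` in `C̃(N)` for the perfect matching `N` of `G'`
encoded by `f`: a half-edge `(u, x_{(u,v)})` is included iff `{u_out, e¹_uv} ∈ N`,
a half-edge `(x_{(u,v)}, v)` iff `{v_in, e²_uv} ∈ N`, and an unsplit whole edge
`(u,v)` iff both `{u_out, e¹_uv} ∈ N` and `{v_in, e²_uv} ∈ N`. -/
def CNpred {V : Type*} (w : V × V → ℕ) (M : Finset (V × V))
    (f : GPVert V → GPVert V) : TilE V → Prop
  | .whole u v => u ≠ v ∧ ¬ MHit w M u v ∧
      f (.vout u) = .e1 u v ∧ f (.vin v) = .e2 u v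
  | .half1 u v => MHit w M u v ∧ f (.vout u) = .e1 u v
  | .half2 u v => MHit w M u v ∧ f (.vin v) = .e2 u v

instance {V : Type*} [DecidableEq V] (w : V × V → ℕ) (M : Finset (V × V))
    (f : GPVert V → GPVert V) : DecidablePred (CNpred w M f) := fun e => by
  cases e <;> simp only [CNpred] <;> infer_instance

/-- The set `C̃(N)` of edges of `G̃` induced by the perfect matching of `G'`
encoded by `f`. -/
def CN {V : Type*} [Fintype V] [DecidableEq V] (w : V × V → ℕ)
    (M : Finset (V × V)) (f : GPVert V → GPVert V) : Finset (TilE V) :=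
  Finset.univ.filter (CNpred w M f)

/-!
A perfect matching `N` of `G'` matches `u_out` to some `e¹_uv` and `v_in` to some `e²_uv`, which
defines a successor and a predecessor of every vertex. Outside the gadgets `e¹_uv` and `e²_uv`
are matched either to each other or both outwards, so successor and predecessor agree on unsplit
edges, and `C̃(N)` has exactly one outgoing and one incoming edge at every vertex. The gadget
`a_{u,v}, b_{u,v}` of an `M`-hit 2-cycle forms a 6-cycle with the four vertices `e¹, e²` of the
2-cycle; once `a` and `b` are matched inside it, the vertices matched outwards are none, both
halves of one edge, the two tails or the two heads, which is exactly evasion. All the weight of `N` sits on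
the edges at `u_out` and `v_in`, that is on the (half-)edges of `C̃(N)`.

Conversely, a Hamiltonian cycle `σ` on at least three vertices has no 2-cycle, so its edges can be
matched outwards while every gadget absorbs the unused edge of its 2-cycle; this perfect matching
of `G'` has weight `w(σ)`, and maximality of `N` gives `w(C̃(N)) ≥ OPT`.
-/

lemma Equiv.Perm.IsCycle.apply_apply_ne {α : Type*} [Fintype α] [DecidableEq α]
    {σ : Equiv.Perm α} (hσ : σ.IsCycle) (h3 : 3 ≤ σ.support.card) {a : α} (ha : σ a ≠ a) :
    σ (σ a) ≠ a := by
  intro h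
  have hdvd : orderOf σ ∣ 2 :=
    orderOf_dvd_of_pow_eq_one ((hσ.pow_eq_one_iff' ha).2 (by simpa [sq]))
  have := Nat.le_of_dvd two_pos (hσ.orderOf ▸ hdvd)
  omega

lemma Fintype.sum_prod_ite_apply_eq {α β γ : Type*} [Fintype α] [Fintype β] [DecidableEq β]
    [AddCommMonoid γ] (g : α → β) (F : α × β → γ) :
    ∑ p : α × β, (if g p.1 = p.2 then F p else 0) = ∑ a, F (a, g a) := by
  simp [Fintype.sum_prod_type]

lemma Fintype.sum_prod_ite_apply_eq' {α β γ : Type*} [Fintype α] [Fintype β] [DecidableEq α]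
    [AddCommMonoid γ] (g : β → α) (F : α × β → γ) :
    ∑ p : α × β, (if g p.2 = p.1 then F p else 0) = ∑ b, F (g b, b) := by
  simp [Fintype.sum_prod_type_right]

section

variable {V : Type*}

def GPVert.equivSum (V : Type*) :
    V ⊕ V ⊕ (V × V) ⊕ (V × V) ⊕ (V × V) ⊕ (V × V) ≃ GPVert V where
  toFun
    | .inl u => .vin u
    | .inr (.inl u) => .vout u
    | .inr (.inr (.inl p)) => .e1 p.1 p.2
    | .inr (.inr (.inr (.inl p))) => .e2 p.1 p.2
    | .inr (.inr (.inr (.inr (.inl p)))) => .ga p.1 p.2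
    | .inr (.inr (.inr (.inr (.inr p)))) => .gb p.1 p.2
  invFun
    | .vin u => .inl u
    | .vout u => .inr (.inl u)
    | .e1 a b => .inr (.inr (.inl (a, b)))
    | .e2 a b => .inr (.inr (.inr (.inl (a, b))))
    | .ga a b => .inr (.inr (.inr (.inr (.inl (a, b)))))
    | .gb a b => .inr (.inr (.inr (.inr (.inr (a, b)))))
  left_inv x := by rcases x with u | u | p | p | p | p <;> rfl
  right_inv y := by cases y <;> rfl

lemma GPVert.sum_eq [Fintype V] {β : Type*} [AddCommMonoid β] (F : GPVert V → β) :
    ∑ x, F x = ∑ u, F (.vin u) + (∑ u, F (.vout u) + (∑ p : V × V, F (.e1 p.1 p.2) +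
      (∑ p : V × V, F (.e2 p.1 p.2) + (∑ p : V × V, F (.ga p.1 p.2) +
        ∑ p : V × V, F (.gb p.1 p.2))))) := by
  simp only [← Equiv.sum_comp (GPVert.equivSum V) F, Fintype.sum_sum_type]
  rfl

def TilE.equivSum (V : Type*) : (V × V) ⊕ (V × V) ⊕ (V × V) ≃ TilE V where
  toFun
    | .inl p => .whole p.1 p.2
    | .inr (.inl p) => .half1 p.1 p.2
    | .inr (.inr p) => .half2 p.1 p.2
  invFun
    | .whole a b => .inl (a, b)
    | .half1 a b => .inr (.inl (a, b))
    | .half2 a b => .inr (.inr (a, b))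
  left_inv x := by rcases x with p | p | p <;> rfl
  right_inv y := by cases y <;> rfl

lemma TilE.sum_eq [Fintype V] {β : Type*} [AddCommMonoid β] (F : TilE V → β) :
    ∑ e, F e = ∑ p : V × V, F (.whole p.1 p.2) + (∑ p : V × V, F (.half1 p.1 p.2) +
      ∑ p : V × V, F (.half2 p.1 p.2)) := by
  simp only [← Equiv.sum_comp (TilE.equivSum V) F, Fintype.sum_sum_type]
  rfl

variable {w : V × V → ℕ} {M : Finset (V × V)} {f : GPVert V → GPVert V} {u v : V}
  {x y : GPVert V}

lemma MHit.symm (h : MHit w M u v) : MHit w M v u :=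
  ⟨h.1.symm, h.2.2.1, h.2.1, h.2.2.2.symm⟩

lemma IsMatching.swap_notMem (hM : IsMatching M) (h : (u, v) ∈ M) : (v, u) ∉ M := by
  intro h'
  have huv : u ≠ v := hM.1 _ h
  exact (hM.2 _ h _ h' (by simp [huv])).2.1 rfl

namespace GPAdj

lemma vout (h : GPAdj w M (.vout u) y) : ∃ v, u ≠ v ∧ y = .e1 u v := by
  rcases h with h | h <;> cases h
  exact ⟨_, ‹_›, rfl⟩

lemma vin (h : GPAdj w M (.vin v) y) : ∃ u, u ≠ v ∧ y = .e2 u v := by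
  rcases h with h | h <;> cases h
  exact ⟨_, ‹_›, rfl⟩

lemma e1 (h : GPAdj w M (.e1 u v) y) :
    y = .e2 u v ∨ y = .vout u ∨ (y = .ga u v ∧ (u, v) ∈ M ∧ MHit w M u v) ∨
      (y = .gb v u ∧ (v, u) ∈ M ∧ MHit w M v u) := by
  rcases h with h | h <;> cases h <;> simp_all

lemma e2 (h : GPAdj w M (.e2 u v) y) :
    y = .e1 u v ∨ y = .vin v ∨ (y = .gb u v ∧ (u, v) ∈ M ∧ MHit w M u v) ∨
      (y = .ga v u ∧ (v, u) ∈ M ∧ MHit w M v u) := by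
  rcases h with h | h <;> cases h <;> simp_all

lemma ga (h : GPAdj w M (.ga u v) y) : y = .e1 u v ∨ y = .e2 v u := by
  rcases h with h | h <;> cases h <;> simp

lemma gb (h : GPAdj w M (.gb u v) y) : y = .e1 v u ∨ y = .e2 u v := by
  rcases h with h | h <;> cases h <;> simp

end GPAdj

/-- The successor of `u` in the cycle cover read off from `f`, which matches `u_out` to
`e¹_{u, matchedSucc f u}` (junk value `u` if `f` is not a perfect matching of `G'`). -/
def matchedSucc (f : GPVert V → GPVert V) (u : V) : V :=
  match f (.vout u) with
  | .e1 _ v => v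
  | _ => u

def matchedPred (f : GPVert V → GPVert V) (v : V) : V :=
  match f (.vin v) with
  | .e2 u _ => u
  | _ => v

namespace IsPMofGP

lemma apply_eq_iff (hf : IsPMofGP w M f) (hx : Genuine w M x) (hy : Genuine w M y) :
    f x = y ↔ f y = x :=
  ⟨fun h => h ▸ (hf x hx).1, fun h => h ▸ (hf y hy).1⟩

lemma apply_vout (hf : IsPMofGP w M f) (u : V) :
    f (.vout u) = .e1 u (matchedSucc f u) ∧ u ≠ matchedSucc f u := by
  obtain ⟨v, huv, h⟩ := (hf (.vout u) trivial).2.vout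
  simp [matchedSucc, h, huv]

lemma apply_vin (hf : IsPMofGP w M f) (v : V) :
    f (.vin v) = .e2 (matchedPred f v) v ∧ matchedPred f v ≠ v := by
  obtain ⟨u, huv, h⟩ := (hf (.vin v) trivial).2.vin
  simp [matchedPred, h, huv]

lemma apply_vout_eq_iff (hf : IsPMofGP w M f) :
    f (.vout u) = .e1 u v ↔ matchedSucc f u = v := by
  simp [(hf.apply_vout u).1]

lemma apply_vin_eq_iff (hf : IsPMofGP w M f) :
    f (.vin v) = .e2 u v ↔ matchedPred f v = u := by
  simp [(hf.apply_vin v).1]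

lemma apply_e1_eq_vout_iff (hf : IsPMofGP w M f) (huv : u ≠ v) :
    f (.e1 u v) = .vout u ↔ matchedSucc f u = v := by
  rw [← hf.apply_eq_iff (x := .vout u) (y := .e1 u v) trivial huv, hf.apply_vout_eq_iff]

lemma apply_e2_eq_vin_iff (hf : IsPMofGP w M f) (huv : u ≠ v) :
    f (.e2 u v) = .vin v ↔ matchedPred f v = u := by
  rw [← hf.apply_eq_iff (x := .vin v) (y := .e2 u v) trivial huv, hf.apply_vin_eq_iff]

lemma matchedSucc_eq_iff (hf : IsPMofGP w M f) (hmh : ¬ MHit w M u v) :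
    matchedSucc f u = v ↔ matchedPred f v = u := by
  by_cases huv : u = v
  · subst huv
    simp [(hf.apply_vout u).2.symm, (hf.apply_vin u).2]
  rw [← hf.apply_e1_eq_vout_iff huv, ← hf.apply_e2_eq_vin_iff huv]
  have e1 : Genuine w M (.e1 u v) := huv
  have e2 : Genuine w M (.e2 u v) := huv
  have := (hf _ e1).1; have := (hf _ e2).1; have := (hf _ e1).2.e1; have := (hf _ e2).2.e2
  have := hmh ∘ MHit.symm
  grind

end IsPMofGP

section DecidableEq

variable [DecidableEq V]

lemma gpw_e1 : gpw w (.e1 u v) y = if y = .vout u then (w (u, v) : ℚ) / 2 else 0 := by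
  cases y <;> simp [gpw, eq_comm]

lemma gpw_e2 : gpw w (.e2 u v) y = if y = .vin v then (w (u, v) : ℚ) / 2 else 0 := by
  cases y <;> simp [gpw, eq_comm]

lemma gpw_ga : gpw w (.ga u v) y = 0 := by
  cases y <;> rfl

lemma gpw_gb : gpw w (.gb u v) y = 0 := by
  cases y <;> rfl

/-- The perfect matching of `G'` induced by a cycle cover `σ` of `G` without cycles of length
`1` or `2`: the edges `(u, σ u)` are matched outwards, every other `e¹_uv` to `e²_uv`, except that
the gadget of an `M`-hit 2-cycle takes the two halves of whichever of its edges `σ` does not use. -/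
def permPM (σ : Equiv.Perm V) (w : V × V → ℕ) (M : Finset (V × V)) : GPVert V → GPVert V
  | .vout u => .e1 u (σ u)
  | .vin v => .e2 (σ⁻¹ v) v
  | .e1 u v =>
      if v = σ u then .vout u
      else if (u, v) ∈ M ∧ MHit w M u v then .ga u v
      else if (v, u) ∈ M ∧ MHit w M v u ∧ u = σ v then .gb v u
      else .e2 u v
  | .e2 u v =>
      if v = σ u then .vin v
      else if (u, v) ∈ M ∧ MHit w M u v then .gb u v
      else if (v, u) ∈ M ∧ MHit w M v u ∧ u = σ v then .ga v u
      else .e1 u v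
  | .ga u v => if v = σ u then .e2 v u else .e1 u v
  | .gb u v => if v = σ u then .e1 v u else .e2 u v

lemma isPMofGP_permPM {σ : Equiv.Perm V} (hM : IsMatching M) (hfix : ∀ u, σ u ≠ u)
    (htwo : ∀ u, σ (σ u) ≠ u) : IsPMofGP w M (permPM σ w M) := by
  intro x hx
  cases x <;> simp only [permPM, GPAdj, Equiv.Perm.coe_inv, Equiv.apply_symm_apply] <;>
    split_ifs <;>
    grind [GPAdjBase, Genuine, MHit.symm, IsMatching.swap_notMem, Equiv.apply_symm_apply,
      Equiv.symm_apply_apply]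

variable [Fintype V]

lemma whole_mem_CN (hf : IsPMofGP w M f) :
    .whole u v ∈ CN w M f ↔ ¬ MHit w M u v ∧ matchedSucc f u = v := by
  simp only [CN, Finset.mem_filter, Finset.mem_univ, true_and, CNpred, hf.apply_vout_eq_iff,
    hf.apply_vin_eq_iff]
  constructor
  · rintro ⟨-, hmh, h, -⟩
    exact ⟨hmh, h⟩
  · rintro ⟨hmh, rfl⟩
    exact ⟨(hf.apply_vout u).2, hmh, rfl, (hf.matchedSucc_eq_iff hmh).1 rfl⟩

lemma whole_mem_CN' (hf : IsPMofGP w M f) :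
    .whole u v ∈ CN w M f ↔ ¬ MHit w M u v ∧ matchedPred f v = u := by
  rw [whole_mem_CN hf, and_congr_right hf.matchedSucc_eq_iff]

lemma half1_mem_CN (hf : IsPMofGP w M f) :
    .half1 u v ∈ CN w M f ↔ MHit w M u v ∧ matchedSucc f u = v := by
  simp [CN, CNpred, hf.apply_vout_eq_iff]

lemma half2_mem_CN (hf : IsPMofGP w M f) :
    .half2 u v ∈ CN w M f ↔ MHit w M u v ∧ matchedPred f v = u := by
  simp [CN, CNpred, hf.apply_vin_eq_iff]

lemma card_filter_tilOutAt_CN (hf : IsPMofGP w M f) (x : V) :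
    ((CN w M f).filter (tilOutAt x)).card = 1 := by
  rw [Finset.card_eq_one]
  refine ⟨if MHit w M x (matchedSucc f x) then .half1 x (matchedSucc f x)
    else .whole x (matchedSucc f x), ?_⟩
  ext e
  cases e <;>
    simp only [Finset.mem_filter, whole_mem_CN hf, half1_mem_CN hf, half2_mem_CN hf, tilOutAt] <;>
    grind

lemma card_filter_tilInAt_CN (hf : IsPMofGP w M f) (x : V) :
    ((CN w M f).filter (tilInAt x)).card = 1 := by
  rw [Finset.card_eq_one]
  refine ⟨if MHit w M (matchedPred f x) x then .half2 (matchedPred f x) x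
    else .whole (matchedPred f x) x, ?_⟩
  ext e
  cases e <;>
    simp only [Finset.mem_filter, whole_mem_CN' hf, half1_mem_CN hf, half2_mem_CN hf, tilInAt] <;>
    grind

lemma half_mem_CN_cases (hf : IsPMofGP w M f) (hM : IsMatching M) (hh : MHit w M u v) :
    let C := CN w M f
    (.half1 u v ∉ C ∧ .half2 u v ∉ C ∧ .half1 v u ∉ C ∧ .half2 v u ∉ C) ∨
    (.half1 u v ∈ C ∧ .half2 u v ∈ C ∧ .half1 v u ∉ C ∧ .half2 v u ∉ C) ∨
    (.half1 u v ∉ C ∧ .half2 u v ∉ C ∧ .half1 v u ∈ C ∧ .half2 v u ∈ C) ∨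
    (.half1 u v ∈ C ∧ .half2 u v ∉ C ∧ .half1 v u ∈ C ∧ .half2 v u ∉ C) ∨
    (.half1 u v ∉ C ∧ .half2 u v ∈ C ∧ .half1 v u ∉ C ∧ .half2 v u ∈ C) := by
  wlog hm : (u, v) ∈ M generalizing u v
  · have := this hh.symm (hh.2.2.2.resolve_left hm)
    grind
  have huv : u ≠ v := hh.1
  simp only [half1_mem_CN hf, half2_mem_CN hf, hh, hh.symm, true_and,
    ← hf.apply_e1_eq_vout_iff huv, ← hf.apply_e2_eq_vin_iff huv,
    ← hf.apply_e1_eq_vout_iff huv.symm, ← hf.apply_e2_eq_vin_iff huv.symm]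
  have hvu : (v, u) ∉ M := hM.swap_notMem hm
  have ga : Genuine w M (.ga u v) := ⟨hm, hh⟩
  have gb : Genuine w M (.gb u v) := ⟨hm, hh⟩
  have e1uv : Genuine w M (.e1 u v) := huv
  have e2uv : Genuine w M (.e2 u v) := huv
  have e1vu : Genuine w M (.e1 v u) := huv.symm
  have e2vu : Genuine w M (.e2 v u) := huv.symm
  have := (hf _ ga).1; have := (hf _ gb).1; have := (hf _ e1uv).1; have := (hf _ e2uv).1
  have := (hf _ e1vu).1; have := (hf _ e2vu).1
  have := (hf _ ga).2.ga; have := (hf _ gb).2.gb; have := (hf _ e1uv).2.e1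
  have := (hf _ e2uv).2.e2; have := (hf _ e1vu).2.e1; have := (hf _ e2vu).2.e2
  grind

lemma isEvadingCC_CN (hf : IsPMofGP w M f) (hM : IsMatching M) :
    IsEvadingCC w M (CN w M f) := by
  refine ⟨fun e he => ?_, fun x => ⟨card_filter_tilOutAt_CN hf x, card_filter_tilInAt_CN hf x⟩,
    fun u v hh => ?_⟩
  · cases e <;> simp_all [CN, CNpred, TilValid]
  · have huv : u ≠ v := hh.1
    rcases half_mem_CN_cases hf hM hh with ⟨h1, h2, h3, h4⟩ | ⟨h1, h2, h3, h4⟩ |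
      ⟨h1, h2, h3, h4⟩ | ⟨h1, h2, h3, h4⟩ | ⟨h1, h2, h3, h4⟩ <;>
    simp [Finset.insert_inter_of_mem, Finset.insert_inter_of_notMem, h1, h2, h3, h4, huv,
      huv.symm]

/-- Only the edges at `u_out` and `v_in` carry weight, and each is counted from both ends. -/
lemma pmWeight_eq (hf : IsPMofGP w M f) :
    pmWeight w M f =
      ∑ u, (w (u, matchedSucc f u) : ℚ) / 2 + ∑ v, (w (matchedPred f v, v) : ℚ) / 2 := by
  have he1 (u v : V) : (if Genuine w M (.e1 u v) then gpw w (.e1 u v) (f (.e1 u v)) else 0) =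
      if matchedSucc f u = v then (w (u, v) : ℚ) / 2 else 0 := by
    by_cases huv : u = v
    · subst huv
      simp [Genuine, (hf.apply_vout u).2.symm]
    · simp [Genuine, huv, gpw_e1, hf.apply_e1_eq_vout_iff huv]
  have he2 (u v : V) : (if Genuine w M (.e2 u v) then gpw w (.e2 u v) (f (.e2 u v)) else 0) =
      if matchedPred f v = u then (w (u, v) : ℚ) / 2 else 0 := by
    by_cases huv : u = v
    · subst huv
      simp [Genuine, (hf.apply_vin u).2]
    · simp [Genuine, huv, gpw_e2, hf.apply_e2_eq_vin_iff huv]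
  simp only [pmWeight, GPVert.sum_eq, he1, he2, Fintype.sum_prod_ite_apply_eq,
    Fintype.sum_prod_ite_apply_eq', gpw_ga, gpw_gb, ite_self, Finset.sum_const_zero]
  simp [(hf.apply_vout _).1, (hf.apply_vin _).1, gpw, Genuine]
  ring

lemma sum_tilw_CN (hf : IsPMofGP w M f) : ∑ e ∈ CN w M f, tilw w e = pmWeight w M f := by
  have hpair (u v : V) :
      (if CNpred w M f (.whole u v) then tilw w (.whole u v) else 0) +
        ((if CNpred w M f (.half1 u v) then tilw w (.half1 u v) else 0) +
          (if CNpred w M f (.half2 u v) then tilw w (.half2 u v) else 0)) =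
      (if matchedSucc f u = v then (w (u, v) : ℚ) / 2 else 0) +
        (if matchedPred f v = u then (w (u, v) : ℚ) / 2 else 0) := by
    have hmem (e : TilE V) : CNpred w M f e ↔ e ∈ CN w M f := by simp [CN]
    simp only [hmem, whole_mem_CN hf, half1_mem_CN hf, half2_mem_CN hf, tilw]
    by_cases hmh : MHit w M u v
    · simp [hmh]
    · simp only [hmh, hf.matchedSucc_eq_iff hmh, not_false_eq_true, true_and, false_and,
        if_false]
      split_ifs <;> ring
  rw [pmWeight_eq hf, CN, Finset.sum_filter, TilE.sum_eq, ← Finset.sum_add_distrib,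
    ← Finset.sum_add_distrib]
  simp only [hpair, Finset.sum_add_distrib, Fintype.sum_prod_ite_apply_eq,
    Fintype.sum_prod_ite_apply_eq']

lemma pmWeight_permPM {σ : Equiv.Perm V} (hM : IsMatching M) (hfix : ∀ u, σ u ≠ u)
    (htwo : ∀ u, σ (σ u) ≠ u) : pmWeight w M (permPM σ w M) = ∑ u, (w (u, σ u) : ℚ) := by
  have hσ : ∑ v, (w (σ⁻¹ v, v) : ℚ) / 2 = ∑ u, (w (u, σ u) : ℚ) / 2 := by
    simpa using (Equiv.sum_comp σ (fun v => (w (σ⁻¹ v, v) : ℚ) / 2)).symm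
  rw [pmWeight_eq (isPMofGP_permPM hM hfix htwo)]
  simp only [matchedSucc, matchedPred, permPM, hσ, ← Finset.sum_add_distrib, add_halves]

end DecidableEq

end

theorem stmt3_general {V : Type*} [Fintype V] [DecidableEq V]
    (w : V × V → ℕ)
    (M : Finset (V × V)) (hM : IsMatching M)
    (f : GPVert V → GPVert V) (hf : IsPMofGP w M f) :
    (IsEvadingCC w M (CN w M f) ∧
      ∑ e ∈ CN w M f, tilw w e = pmWeight w M f) ∧
    (3 ≤ Fintype.card V →
      (∀ g : GPVert V → GPVert V, IsPMofGP w M g → pmWeight w M g ≤ pmWeight w M f) →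
      ∀ T : Finset (V × V), IsHamCycle T →
        (∑ e ∈ T, (w e : ℚ)) ≤ ∑ e ∈ CN w M f, tilw w e) := by
  refine ⟨⟨isEvadingCC_CN hf hM, sum_tilw_CN hf⟩, fun h3 hmax T hT => ?_⟩
  obtain ⟨σ, hσ, hsupp, rfl⟩ := hT
  have hfix (u : V) : σ u ≠ u := Equiv.Perm.mem_support.1 (hsupp ▸ Finset.mem_univ u)
  have htwo (u : V) : σ (σ u) ≠ u :=
    hσ.apply_apply_ne (by rwa [hsupp, Finset.card_univ]) (hfix u)
  calc ∑ e ∈ univ.image (fun v => (v, σ v)), (w e : ℚ)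
      = ∑ u, (w (u, σ u) : ℚ) := Finset.sum_image fun _ _ _ _ h => congrArg Prod.fst h
    _ = pmWeight w M (permPM σ w M) := (pmWeight_permPM hM hfix htwo).symm
    _ ≤ pmWeight w M f := hmax _ (isPMofGP_permPM hM hfix htwo)
    _ = ∑ e ∈ CN w M f, tilw w e := (sum_tilw_CN hf).symm

/-- (1) For every perfect matching `N` of `G'` (encoded by `f`), `C̃(N)` is a
cycle cover evading `M` and `w(C̃(N)) = w(N)`; (2) if moreover `|V| ≥ 3` and `N`
is a maximum weight perfect matching of `G'`, then `w(C̃(N)) ≥ OPT`. -/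
theorem stmt3 {V : Type*} [Fintype V] [DecidableEq V]
    (w : V × V → ℕ) (hw : ∀ e : V × V, w e ≤ 1)
    (M : Finset (V × V)) (hM : IsMatching M)
    (f : GPVert V → GPVert V) (hf : IsPMofGP w M f) :
    (IsEvadingCC w M (CN w M f) ∧
      ∑ e ∈ CN w M f, tilw w e = pmWeight w M f) ∧
    (3 ≤ Fintype.card V →
      (∀ g : GPVert V → GPVert V, IsPMofGP w M g → pmWeight w M g ≤ pmWeight w M f) →
      ∀ T : Finset (V × V), IsHamCycle T →
        (∑ e ∈ T, (w e : ℚ)) ≤ ∑ e ∈ CN w M f, tilw w e) :=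
  stmt3_general w M hM f hf
end

section
/- Let V be a finite set, M a perfect matching of the complete directed graph on V, and C a cycle cover of the complete directed graph on V such that C contains no 2-cycle {(u,v),(v,u)} for which M contains an edge joining u and v (in either direction). Then in the directed multigraph G_m formed by the multiset union of M and C: (a) every vertex has total degree (in-degree plus out-degree, counting multiplicities) exactly 3; (b) every vertex has in-degree at most 2 and out-degree at most 2; (c) for each pair of distinct vertices u, v, the total number of edges of G_m joining u and v (in both directions combined, counting multiplicities) is at most 2. -/
open Finset

/-- `C` is a cycle cover: every vertex has exactly one outgoing and exactly one
incoming edge in `C`. -/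
def IsCycleCover {V : Type*} (C : Finset (V × V)) : Prop :=
  (∀ e ∈ C, e.1 ≠ e.2) ∧
  (∀ v : V, ∃! e, e ∈ C ∧ e.1 = v) ∧
  (∀ v : V, ∃! e, e ∈ C ∧ e.2 = v)

/-- The multiplicity of a directed edge in the multiset union `G_m` of a matching
`M` and a cycle cover `C`: two copies if the edge lies in both, one copy if it
lies in exactly one of them. -/
def multGm {V : Type*} [DecidableEq V] (M C : Finset (V × V)) (e : V × V) : ℕ :=
  (if e ∈ M then 1 else 0) + (if e ∈ C then 1 else 0)

lemma sumC_out {V : Type*} [Fintype V] [DecidableEq V] (C : Finset (V × V))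
    (hC : IsCycleCover C) (v : V) :
    (∑ x : V, if (v, x) ∈ C then 1 else 0) = 1 := by
  obtain ⟨e, ⟨heC, he1⟩, huniq⟩ := hC.2.1 v
  have : (univ.filter (fun x => (v, x) ∈ C)) = {e.2} := by
    ext x
    simp only [mem_filter, mem_univ, true_and, mem_singleton]
    constructor
    · intro hx
      have := huniq (v, x) ⟨hx, rfl⟩
      exact congrArg Prod.snd this
    · rintro rfl
      have : (v, e.2) = e := by rw [← he1]
      rw [this]; exact heC
  calc (∑ x : V, if (v, x) ∈ C then 1 else 0)
      = (univ.filter (fun x => (v, x) ∈ C)).card := by rw [Finset.card_filter]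
    _ = 1 := by rw [this, card_singleton]

lemma sumC_in {V : Type*} [Fintype V] [DecidableEq V] (C : Finset (V × V))
    (hC : IsCycleCover C) (v : V) :
    (∑ x : V, if (x, v) ∈ C then 1 else 0) = 1 := by
  obtain ⟨e, ⟨heC, he2⟩, huniq⟩ := hC.2.2 v
  have : (univ.filter (fun x => (x, v) ∈ C)) = {e.1} := by
    ext x
    simp only [mem_filter, mem_univ, true_and, mem_singleton]
    constructor
    · intro hx
      have := huniq (x, v) ⟨hx, rfl⟩
      exact congrArg Prod.fst this
    · rintro rfl
      have : (e.1, v) = e := by rw [← he2]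
      rw [this]; exact heC
  calc (∑ x : V, if (x, v) ∈ C then 1 else 0)
      = (univ.filter (fun x => (x, v) ∈ C)).card := by rw [Finset.card_filter]
    _ = 1 := by rw [this, card_singleton]

lemma sumM_deg {V : Type*} [Fintype V] [DecidableEq V] (M : Finset (V × V))
    (hM : IsPerfectMatching M) (v : V) :
    (∑ x : V, if (v, x) ∈ M then 1 else 0) +
    (∑ x : V, if (x, v) ∈ M then 1 else 0) = 1 := by
  obtain ⟨⟨hne, hdisj⟩, hperf⟩ := hM
  obtain ⟨e, heM, hv⟩ := hperf v
  have e1 : (∑ x : V, if (v, x) ∈ M then 1 else 0)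
      = (univ.filter (fun x => (v, x) ∈ M)).card := (Finset.card_filter _ _).symm
  have e2 : (∑ x : V, if (x, v) ∈ M then 1 else 0)
      = (univ.filter (fun x => (x, v) ∈ M)).card := (Finset.card_filter _ _).symm
  rw [e1, e2]
  rcases hv with hv | hv
  · have hA : (univ.filter (fun x => (v, x) ∈ M)) = {e.2} := by
      ext x
      simp only [mem_filter, mem_univ, true_and, mem_singleton]
      constructor
      · intro hx
        by_contra hxe
        have hne' : (v, x) ≠ e := by
          intro h; apply hxe; rw [← h]
        have := (hdisj _ hx _ heM hne').1
        exact this hv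
      · rintro rfl
        have : (v, e.2) = e := by rw [hv]
        rw [this]; exact heM
    have hB : (univ.filter (fun x => (x, v) ∈ M)) = ∅ := by
      ext x
      simp only [mem_filter, mem_univ, true_and, notMem_empty, iff_false]
      intro hx
      by_cases hxe : (x, v) = e
      · have h2 : e.2 = v := by rw [← hxe]
        exact hne e heM (hv.symm.trans h2.symm)
      · exact (hdisj _ hx _ heM hxe).2.2.1 hv
    rw [hA, hB]; simp
  · have hA : (univ.filter (fun x => (v, x) ∈ M)) = ∅ := by
      ext x
      simp only [mem_filter, mem_univ, true_and, notMem_empty, iff_false]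
      intro hx
      by_cases hxe : (v, x) = e
      · have h1 : e.1 = v := by rw [← hxe]
        exact hne e heM (h1.trans hv)
      · exact (hdisj _ hx _ heM hxe).2.1 hv
    have hB : (univ.filter (fun x => (x, v) ∈ M)) = {e.1} := by
      ext x
      simp only [mem_filter, mem_univ, true_and, mem_singleton]
      constructor
      · intro hx
        by_contra hxe'
        have hne' : (x, v) ≠ e := by
          intro h; apply hxe'; rw [← h]
        exact (hdisj _ hx _ heM hne').2.2.2 hv
      · rintro rfl
        have : (e.1, v) = e := by rw [hv]
        rw [this]; exact heM
    rw [hA, hB]; simp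

/-- If `M` is a perfect matching and `C` a cycle cover containing no 2-cycle on
vertices joined (in either direction) by an edge of `M`, then in the multigraph
`G_m = M ⊎ C`: (a) every vertex has total degree 3; (b) every vertex has
in-degree ≤ 2 and out-degree ≤ 2; (c) any two distinct vertices are joined by at
most 2 edges (both directions combined, with multiplicities). -/
theorem stmt4 {V : Type*} [Fintype V] [DecidableEq V]
    (M C : Finset (V × V)) (hM : IsPerfectMatching M) (hC : IsCycleCover C)
    (h2c : ∀ u v : V, (u, v) ∈ C → (v, u) ∈ C → (u, v) ∉ M ∧ (v, u) ∉ M) :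
    (∀ v : V, ((∑ x : V, multGm M C (v, x)) + ∑ x : V, multGm M C (x, v)) = 3) ∧
    (∀ v : V, (∑ x : V, multGm M C (x, v)) ≤ 2 ∧ (∑ x : V, multGm M C (v, x)) ≤ 2) ∧
    (∀ u v : V, u ≠ v → multGm M C (u, v) + multGm M C (v, u) ≤ 2) := by
  have hout : ∀ v : V, (∑ x : V, multGm M C (v, x)) =
      (∑ x : V, if (v, x) ∈ M then 1 else 0) + (∑ x : V, if (v, x) ∈ C then 1 else 0) := by
    intro v; rw [← Finset.sum_add_distrib]; rfl
  have hin : ∀ v : V, (∑ x : V, multGm M C (x, v)) =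
      (∑ x : V, if (x, v) ∈ M then 1 else 0) + (∑ x : V, if (x, v) ∈ C then 1 else 0) := by
    intro v; rw [← Finset.sum_add_distrib]; rfl
  have hMdeg := fun v => sumM_deg M hM v
  have hCout := fun v => sumC_out C hC v
  have hCin := fun v => sumC_in C hC v
  refine ⟨?_, ?_, ?_⟩
  · intro v
    rw [hout v, hin v, hCout v, hCin v]
    have := hMdeg v
    omega
  · intro v
    have h3 := hMdeg v
    constructor
    · rw [hin v, hCin v]; omega
    · rw [hout v, hCout v]; omega
  · intro u v huv
    have hMnot : ¬((u, v) ∈ M ∧ (v, u) ∈ M) := by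
      rintro ⟨h1, h2⟩
      have hne : ((u, v) : V × V) ≠ (v, u) := by
        intro h; exact huv (congrArg Prod.fst h)
      exact (hM.1.2 _ h1 _ h2 hne).2.1 rfl
    by_cases hc1 : (u, v) ∈ C <;> by_cases hc2 : (v, u) ∈ C
    · obtain ⟨m1, m2⟩ := h2c u v hc1 hc2
      simp [multGm, hc1, hc2, m1, m2]
    all_goals
      by_cases h1 : (u, v) ∈ M <;> by_cases h2 : (v, u) ∈ M <;>
        first
          | exact absurd (And.intro h1 h2) hMnot
          | simp [multGm, hc1, hc2, h1, h2]
end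

section
/- Let c be a directed cycle of length ℓ ≥ 3 on a vertex set S, let I be a multiset of ichords of c with |I| ≤ ℓ − 2 (each ichord is an additional parallel copy of an edge of c, with at most one extra copy per edge of c), and let R be a set of rays of c with |R| ≤ 1, each ray being a directed edge with exactly one endpoint in S. Assume that in the multigraph D consisting of the edges of c, the ichords I, and the rays R, every vertex has in-degree at most 2 and out-degree at most 2. Then for any assignment of a color (out of two colors) to the ray (if present), there is an extension to a 2-coloring of the edges of c and the ichords in I such that the resulting 2-coloring of all of D is a path-2-coloring. -/
open Finset

/-- Out-degree of `v` in the edge set `P`. -/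
def outdeg {V : Type*} [DecidableEq V] (P : Finset (V × V)) (v : V) : ℕ :=
  (P.filter fun e => e.1 = v).card

/-- In-degree of `v` in the edge set `P`. -/
def indeg {V : Type*} [DecidableEq V] (P : Finset (V × V)) (v : V) : ℕ :=
  (P.filter fun e => e.2 = v).card

/-- `P` is a vertex-disjoint union of simple directed paths: every vertex has
in-degree ≤ 1 and out-degree ≤ 1 and there is no directed cycle (every
subset in which all vertices are balanced is empty). -/
def IsPathSystem {V : Type*} [DecidableEq V] (P : Finset (V × V)) : Prop :=
  (∀ v, outdeg P v ≤ 1) ∧ (∀ v, indeg P v ≤ 1) ∧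
  ∀ T ⊆ P, (∀ v, outdeg T v = indeg T v) → T = ∅

/-- `c` is a directed cycle on vertex set `S`: its edges are `(v, σ v)` for `v ∈ S`,
for a cyclic permutation `σ` with support `S`. -/
def IsCycleOn {V : Type*} [Fintype V] [DecidableEq V]
    (c : Finset (V × V)) (S : Finset V) : Prop :=
  ∃ σ : Equiv.Perm V, σ.IsCycle ∧ σ.support = S ∧ c = S.image fun v => (v, σ v)

/-- The set of edges of the multigraph `c ⊎ I ⊎ R` (cycle edges, ichords, rays)
receiving color `b`, where `χ1` colors the primary copies of the cycle edges,
`χ2` the ichord copies, and `χr` the rays. -/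
def colorClass {V : Type*} [DecidableEq V] (c I R : Finset (V × V))
    (χ1 χ2 χr : V × V → Bool) (b : Bool) : Finset (V × V) :=
  (c.filter fun e => χ1 e = b) ∪ (I.filter fun e => χ2 e = b) ∪
    (R.filter fun e => χr e = b)

/-- A 2-coloring of the multigraph consisting of the cycle edges `c`, the ichords
`I ⊆ c` (parallel copies) and the rays `R` is a path-2-coloring when parallel
copies get distinct colors and each color class is a vertex-disjoint union of
simple directed paths. -/
def IsPath2ColoringD {V : Type*} [DecidableEq V] (c I R : Finset (V × V))
    (χ1 χ2 χr : V × V → Bool) : Prop :=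
  (∀ e ∈ I, χ2 e ≠ χ1 e) ∧ ∀ b : Bool, IsPathSystem (colorClass c I R χ1 χ2 χr b)

/-!
Pick a cycle edge `e` that is not doubled by an ichord (adjacent to the ray, on the ray's side,
if there is one; the degree bound forbids an ichord there), give it colour `!b` and every other
primary cycle edge colour `b`, where `b` is the colour of the ray, and give each ichord the colour
opposite to its partner. Then each colour class consists of cycle edges and at most one ray, and
misses some cycle edge: class `b` misses `e`, class `!b` misses a second undoubled edge, which
exists because `|I| ≤ ℓ - 2`. Degrees are fine since the ray sits where `e` was, and the only
possible directed cycle in a class is the whole cycle `c`, since a ray ends (or starts) at a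
vertex off the cycle, where no other edge leaves (or enters).
-/

section Degrees

variable {V : Type*} [DecidableEq V] {P Q T : Finset (V × V)} {e r : V × V} {v : V}

lemma outdeg_mono (h : P ⊆ Q) (v : V) : outdeg P v ≤ outdeg Q v :=
  card_le_card (filter_subset_filter _ h)

lemma indeg_mono (h : P ⊆ Q) (v : V) : indeg P v ≤ indeg Q v :=
  card_le_card (filter_subset_filter _ h)

lemma outdeg_pos_of_mem (he : e ∈ P) : 0 < outdeg P e.1 :=
  card_pos.2 ⟨e, mem_filter.2 ⟨he, rfl⟩⟩

lemma indeg_pos_of_mem (he : e ∈ P) : 0 < indeg P e.2 :=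
  card_pos.2 ⟨e, mem_filter.2 ⟨he, rfl⟩⟩

lemma outdeg_insert_of_ne (h : r.1 ≠ v) : outdeg (insert r P) v = outdeg P v := by
  simp [outdeg, filter_insert, h]

lemma indeg_insert_of_ne (h : r.2 ≠ v) : indeg (insert r P) v = indeg P v := by
  simp [indeg, filter_insert, h]

lemma outdeg_insert_le (r : V × V) (P : Finset (V × V)) (v : V) :
    outdeg (insert r P) v ≤ outdeg P v + 1 := by
  rw [outdeg, filter_insert]
  split_ifs
  exacts [card_insert_le _ _, Nat.le_succ _]

lemma indeg_insert_le (r : V × V) (P : Finset (V × V)) (v : V) :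
    indeg (insert r P) v ≤ indeg P v + 1 := by
  rw [indeg, filter_insert]
  split_ifs
  exacts [card_insert_le _ _, Nat.le_succ _]

lemma outdeg_eq_zero_of_subset (h : P ⊆ Q) (hQ : outdeg Q v = 0) : outdeg P v = 0 :=
  Nat.le_zero.1 (hQ ▸ outdeg_mono h v)

lemma indeg_eq_zero_of_subset (h : P ⊆ Q) (hQ : indeg Q v = 0) : indeg P v = 0 :=
  Nat.le_zero.1 (hQ ▸ indeg_mono h v)

lemma outdeg_erase_eq_zero (he : e ∈ P) (h : outdeg P e.1 ≤ 1) :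
    outdeg (P.erase e) e.1 = 0 := by
  have he' : e ∈ P.filter (·.1 = e.1) := mem_filter.2 ⟨he, rfl⟩
  rw [outdeg, filter_erase, card_erase_of_mem he']
  exact Nat.sub_eq_zero_of_le h

lemma indeg_erase_eq_zero (he : e ∈ P) (h : indeg P e.2 ≤ 1) :
    indeg (P.erase e) e.2 = 0 := by
  have he' : e ∈ P.filter (·.2 = e.2) := mem_filter.2 ⟨he, rfl⟩
  rw [indeg, filter_erase, card_erase_of_mem he']
  exact Nat.sub_eq_zero_of_le h

lemma exists_fst_eq_of_balanced (hbal : ∀ v, outdeg T v = indeg T v) (he : e ∈ T) :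
    ∃ f ∈ T, f.1 = e.2 := by
  have := (hbal e.2).symm ▸ indeg_pos_of_mem he
  obtain ⟨f, hf⟩ := card_pos.1 this
  exact ⟨f, (mem_filter.1 hf).1, (mem_filter.1 hf).2⟩

lemma exists_snd_eq_of_balanced (hbal : ∀ v, outdeg T v = indeg T v) (he : e ∈ T) :
    ∃ f ∈ T, f.2 = e.1 := by
  have := hbal e.1 ▸ outdeg_pos_of_mem he
  obtain ⟨f, hf⟩ := card_pos.1 this
  exact ⟨f, (mem_filter.1 hf).1, (mem_filter.1 hf).2⟩

end Degrees

section PathSystem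

variable {V : Type*} [DecidableEq V] {P Q : Finset (V × V)} {r : V × V}

lemma IsPathSystem.mono (hQ : IsPathSystem Q) (h : P ⊆ Q) : IsPathSystem P :=
  ⟨fun v => (outdeg_mono h v).trans (hQ.1 v), fun v => (indeg_mono h v).trans (hQ.2.1 v),
    fun T hT => hQ.2.2 T (hT.trans h)⟩

/-- By `hend`, `r` runs into a sink or out of a source of `P`, so it closes no cycle. -/
lemma IsPathSystem.insert (hP : IsPathSystem P) (hout : outdeg P r.1 = 0)
    (hin : indeg P r.2 = 0) (hloop : r.1 ≠ r.2) (hend : outdeg P r.2 = 0 ∨ indeg P r.1 = 0) :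
    IsPathSystem (insert r P) := by
  obtain ⟨hPout, hPin, hPacyc⟩ := hP
  refine ⟨fun v => ?_, fun v => ?_, fun T hT hbal => ?_⟩
  · by_cases hv : r.1 = v
    · have := outdeg_insert_le r P v
      rw [← hv] at this ⊢
      omega
    · exact (outdeg_insert_of_ne hv).trans_le (hPout v)
  · by_cases hv : r.2 = v
    · have := indeg_insert_le r P v
      rw [← hv] at this ⊢
      omega
    · exact (indeg_insert_of_ne hv).trans_le (hPin v)
  by_cases hrT : r ∈ T
  · exfalso
    rcases hend with hend | hend
    · obtain ⟨f, hf, hf1⟩ := exists_fst_eq_of_balanced hbal hrT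
      rcases mem_insert.1 (hT hf) with rfl | hfP
      · exact hloop hf1
      · exact (outdeg_pos_of_mem hfP).ne' (hf1 ▸ hend)
    · obtain ⟨f, hf, hf2⟩ := exists_snd_eq_of_balanced hbal hrT
      rcases mem_insert.1 (hT hf) with rfl | hfP
      · exact hloop hf2.symm
      · exact (indeg_pos_of_mem hfP).ne' (hf2 ▸ hend)
  · refine hPacyc T (fun e he => (mem_insert.1 (hT he)).resolve_left ?_) hbal
    rintro rfl
    exact hrT he

end PathSystem

section PermEdges

variable {V : Type*} [Fintype V] [DecidableEq V] {σ : Equiv.Perm V} {T : Finset (V × V)}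
  {e r : V × V} {v : V}

def permEdges (σ : Equiv.Perm V) : Finset (V × V) :=
  σ.support.image fun v => (v, σ v)

lemma mem_permEdges : e ∈ permEdges σ ↔ e.1 ∈ σ.support ∧ σ e.1 = e.2 := by
  obtain ⟨u, w⟩ := e
  simp [permEdges, and_comm]

lemma mk_mem_permEdges {u w : V} : (u, w) ∈ permEdges σ ↔ u ∈ σ.support ∧ σ u = w :=
  mem_permEdges

lemma card_permEdges : (permEdges σ).card = σ.support.card :=
  card_image_of_injective _ fun _ _ h => congrArg Prod.fst h

lemma outdeg_permEdges_le_one (σ : Equiv.Perm V) (v : V) : outdeg (permEdges σ) v ≤ 1 := by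
  refine (card_le_card (t := {(v, σ v)}) fun ⟨u, w⟩ hf => ?_).trans (card_singleton _).le
  obtain ⟨hmem, rfl : u = v⟩ := mem_filter.1 hf
  obtain ⟨-, rfl⟩ := mk_mem_permEdges.1 hmem
  exact mem_singleton_self _

lemma indeg_permEdges_le_one (σ : Equiv.Perm V) (v : V) : indeg (permEdges σ) v ≤ 1 := by
  refine (card_le_card (t := {(σ⁻¹ v, v)}) fun ⟨u, w⟩ hf => ?_).trans (card_singleton _).le
  obtain ⟨hmem, rfl : w = v⟩ := mem_filter.1 hf
  obtain ⟨-, rfl⟩ := mk_mem_permEdges.1 hmem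
  simp

lemma outdeg_permEdges_of_notMem (hv : v ∉ σ.support) : outdeg (permEdges σ) v = 0 :=
  card_eq_zero.2 <| filter_eq_empty_iff.2 fun _ hf hfv => hv (hfv ▸ (mem_permEdges.1 hf).1)

lemma indeg_permEdges_of_notMem (hv : v ∉ σ.support) : indeg (permEdges σ) v = 0 :=
  card_eq_zero.2 <| filter_eq_empty_iff.2 fun f hf hfv => by
    obtain ⟨hf1, hf2⟩ := mem_permEdges.1 hf
    exact hv (hfv ▸ hf2 ▸ σ.apply_mem_support.2 hf1)

lemma permEdges_subset_of_balanced (hσ : σ.IsCycle) (hT : T ⊆ permEdges σ)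
    (hbal : ∀ v, outdeg T v = indeg T v) (hne : T.Nonempty) : permEdges σ ⊆ T := by
  have step : ∀ v, (v, σ v) ∈ T → (σ v, σ (σ v)) ∈ T := by
    intro v hv
    obtain ⟨⟨u, w⟩, hf, rfl : u = σ v⟩ := exists_fst_eq_of_balanced hbal hv
    obtain ⟨-, rfl⟩ := mk_mem_permEdges.1 (hT hf)
    exact hf
  obtain ⟨⟨u, w⟩, hu⟩ := hne
  obtain ⟨hu_supp, rfl⟩ := mk_mem_permEdges.1 (hT hu)
  have orbit : ∀ n : ℕ, ((σ ^ n) u, σ ((σ ^ n) u)) ∈ T := fun n => by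
    induction n with
    | zero => exact hu
    | succ n ih => simpa only [pow_succ', Equiv.Perm.mul_apply] using step _ ih
  rintro ⟨v, w⟩ hvw
  obtain ⟨hv, rfl⟩ := mk_mem_permEdges.1 hvw
  obtain ⟨n, rfl⟩ :=
    hσ.exists_pow_eq (Equiv.Perm.mem_support.1 hu_supp) (Equiv.Perm.mem_support.1 hv)
  exact orbit n

lemma isPathSystem_erase_permEdges (hσ : σ.IsCycle) (he : e ∈ permEdges σ) :
    IsPathSystem ((permEdges σ).erase e) := by
  refine ⟨fun v => (outdeg_mono (erase_subset _ _) v).trans (outdeg_permEdges_le_one σ v),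
    fun v => (indeg_mono (erase_subset _ _) v).trans (indeg_permEdges_le_one σ v),
    fun T hT hbal => ?_⟩
  by_contra hne
  have := permEdges_subset_of_balanced hσ (hT.trans (erase_subset _ _)) hbal
    (nonempty_iff_ne_empty.2 hne) he
  exact notMem_erase e _ (hT this)

/-- The ray `r` replaces the cycle edge at its endpoint on the cycle, on the same side. -/
lemma exists_isPathSystem_insert_erase_permEdges (hσ : σ.IsCycle) {I R : Finset (V × V)}
    (hr : (r.1 ∈ σ.support ∧ r.2 ∉ σ.support) ∨
      (r.1 ∉ σ.support ∧ r.2 ∈ σ.support)) (hrR : r ∈ R)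
    (hdeg : ∀ v : V, outdeg (permEdges σ) v + outdeg I v + outdeg R v ≤ 2 ∧
      indeg (permEdges σ) v + indeg I v + indeg R v ≤ 2) :
    ∃ e ∈ permEdges σ \ I, IsPathSystem (insert r ((permEdges σ).erase e)) := by
  rcases hr with ⟨h1, h2⟩ | ⟨h1, h2⟩
  · have he : (r.1, σ r.1) ∈ permEdges σ := mem_permEdges.2 ⟨h1, rfl⟩
    refine ⟨_, mem_sdiff.2 ⟨he, fun heI => ?_⟩, (isPathSystem_erase_permEdges hσ he).insert
      (outdeg_erase_eq_zero he (outdeg_permEdges_le_one σ _)) ?_ ?_ (Or.inl ?_)⟩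
    · have := (hdeg r.1).1
      have : 0 < outdeg (permEdges σ) r.1 := outdeg_pos_of_mem (e := (r.1, σ r.1)) he
      have : 0 < outdeg I r.1 := outdeg_pos_of_mem (e := (r.1, σ r.1)) heI
      have := outdeg_pos_of_mem hrR
      omega
    · exact indeg_eq_zero_of_subset (erase_subset _ _) (indeg_permEdges_of_notMem h2)
    · exact fun h => h2 (h ▸ h1)
    · exact outdeg_eq_zero_of_subset (erase_subset _ _) (outdeg_permEdges_of_notMem h2)
  · have he : (σ⁻¹ r.2, r.2) ∈ permEdges σ :=
      mk_mem_permEdges.2 ⟨by rwa [← Equiv.Perm.support_inv, Equiv.Perm.apply_mem_support,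
        Equiv.Perm.support_inv], σ.apply_symm_apply r.2⟩
    refine ⟨_, mem_sdiff.2 ⟨he, fun heI => ?_⟩, (isPathSystem_erase_permEdges hσ he).insert
      ?_ (indeg_erase_eq_zero he (indeg_permEdges_le_one σ _)) ?_ (Or.inr ?_)⟩
    · have := (hdeg r.2).2
      have : 0 < indeg (permEdges σ) r.2 := indeg_pos_of_mem (e := (σ⁻¹ r.2, r.2)) he
      have : 0 < indeg I r.2 := indeg_pos_of_mem (e := (σ⁻¹ r.2, r.2)) heI
      have := indeg_pos_of_mem hrR
      omega
    · exact outdeg_eq_zero_of_subset (erase_subset _ _) (outdeg_permEdges_of_notMem h1)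
    · exact fun h => h1 (h ▸ h2)
    · exact indeg_eq_zero_of_subset (erase_subset _ _) (indeg_permEdges_of_notMem h1)

end PermEdges

section Coloring

variable {V : Type*} [DecidableEq V] {c I R : Finset (V × V)} {e e' : V × V} {b : Bool}

lemma colorClass_subset_erase_union {χ1 χ2 χr : V × V → Bool} (hI : I ⊆ c) (heI : e ∉ I)
    (he : χ1 e ≠ b) :
    colorClass c I R χ1 χ2 χr b ⊆ c.erase e ∪ R.filter fun r => χr r = b := by
  intro f hf
  simp only [colorClass, mem_union, mem_filter, mem_erase] at hf ⊢
  rcases hf with (⟨hfc, hfb⟩ | ⟨hfI, -⟩) | hfR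
  · exact Or.inl ⟨by rintro rfl; exact he hfb, hfc⟩
  · exact Or.inl ⟨by rintro rfl; exact heI hfI, hI hfI⟩
  · exact Or.inr hfR

lemma exists_isPath2ColoringD_of_isPathSystem_erase {χr : V × V → Bool} (hI : I ⊆ c)
    (heI : e ∉ I) (he'I : e' ∉ I) (hne : e' ≠ e) (hray : ∀ r ∈ R, χr r = b)
    (hP : IsPathSystem (c.erase e ∪ R)) (hP' : IsPathSystem (c.erase e')) :
    ∃ χ1 χ2 : V × V → Bool, IsPath2ColoringD c I R χ1 χ2 χr := by
  let χ1 : V × V → Bool := fun f => if f = e then !b else b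
  refine ⟨χ1, fun f => !χ1 f, fun f _ => Bool.not_ne_self _, fun b' => ?_⟩
  obtain rfl | rfl : b' = b ∨ b' = !b := by cases b <;> cases b' <;> simp
  · exact hP.mono ((colorClass_subset_erase_union (χ1 := χ1) hI heI (by simp [χ1])).trans
      (union_subset_union_right (filter_subset _ _)))
  · refine hP'.mono ((colorClass_subset_erase_union hI he'I (by simp [χ1, hne])).trans ?_)
    rw [filter_eq_empty_iff.2 fun r hr => by simp [hray r hr], union_empty]

end Coloring

/-- Let `c` be a directed cycle of length `ℓ ≥ 3` on `S`, `I ⊆ c` ichords with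
`|I| ≤ ℓ − 2`, and `R` a set of at most one ray (an edge with exactly one
endpoint in `S`), with all in/out-degrees in `c ⊎ I ⊎ R` at most 2. Then every
coloring of the ray (if present) extends to a path-2-coloring of the whole
multigraph. -/
theorem stmt6 {V : Type*} [Fintype V] [DecidableEq V]
    (S : Finset V) (c : Finset (V × V)) (ℓ : ℕ)
    (hc : IsCycleOn c S) (hlen : S.card = ℓ) (h3 : 3 ≤ ℓ)
    (I : Finset (V × V)) (hI : I ⊆ c) (hIcard : I.card ≤ ℓ - 2)
    (R : Finset (V × V))
    (hR : ∀ e ∈ R, (e.1 ∈ S ∧ e.2 ∉ S) ∨ (e.1 ∉ S ∧ e.2 ∈ S))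
    (hR1 : R.card ≤ 1)
    (hdeg : ∀ v : V, outdeg c v + outdeg I v + outdeg R v ≤ 2 ∧
                     indeg c v + indeg I v + indeg R v ≤ 2)
    (χr : V × V → Bool) :
    ∃ χ1 χ2 : V × V → Bool, IsPath2ColoringD c I R χ1 χ2 χr := by
  obtain ⟨σ, hσ, rfl, hc⟩ := hc
  obtain rfl : c = permEdges σ := hc
  have hfree : 1 < (permEdges σ \ I).card := by
    rw [card_sdiff_of_subset hI, card_permEdges]
    omega
  obtain ⟨e, heI, b, hray, hP⟩ : ∃ e ∈ permEdges σ \ I, ∃ b : Bool,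
      (∀ r ∈ R, χr r = b) ∧ IsPathSystem ((permEdges σ).erase e ∪ R) := by
    rcases R.eq_empty_or_nonempty with rfl | ⟨r, hrR⟩
    · obtain ⟨e, he⟩ := card_pos.1 (zero_lt_one.trans hfree)
      exact ⟨e, he, true, by simp,
        by simpa using isPathSystem_erase_permEdges hσ (sdiff_subset he)⟩
    · obtain rfl : R = {r} :=
        eq_singleton_iff_unique_mem.2 ⟨hrR, fun x hx => card_le_one.1 hR1 x hx r hrR⟩
      obtain ⟨e, he, hP⟩ := exists_isPathSystem_insert_erase_permEdges hσ (hR r hrR) hrR hdeg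
      exact ⟨e, he, χr r, by simp, by rwa [union_comm, ← insert_eq]⟩
  obtain ⟨e', he', hne⟩ := exists_mem_ne hfree e
  exact exists_isPath2ColoringD_of_isPathSystem_erase hI (mem_sdiff.1 heI).2
    (mem_sdiff.1 he').2 hne hray hP (isPathSystem_erase_permEdges hσ (sdiff_subset he'))
end

section
/- Let D be a directed multigraph and let f₁ ≠ f₂ be two edges of D that either both have head v or both have tail v, for some vertex v. Let r₁ ≠ f₁ be an edge of D that shares a tail with f₁ or shares a head with f₁, and let r₂ ≠ f₂ be an edge of D that shares a tail with f₂ or shares a head with f₂. Then in every path-2-coloring χ of D the edges r₁ and r₂ receive different colors: χ(r₁) ≠ χ(r₂). -/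
open Finset

/-- A path-2-coloring of a directed multigraph (edge index type `E`, endpoint maps
`src`/`tgt`): each color class has in/out-degree at most 1 at every vertex and
contains no directed cycle (every monochromatic subset in which all vertices are
balanced is empty). -/
def IsPath2ColoringGen {E V : Type*} [Fintype E] [DecidableEq E] [DecidableEq V]
    (src tgt : E → V) (χ : E → Bool) : Prop :=
  (∀ (b : Bool) (v : V),
      (Finset.univ.filter fun e => χ e = b ∧ src e = v).card ≤ 1) ∧
  (∀ (b : Bool) (v : V),
      (Finset.univ.filter fun e => χ e = b ∧ tgt e = v).card ≤ 1) ∧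
  ∀ (b : Bool) (T : Finset E), (∀ e ∈ T, χ e = b) →
    (∀ v : V, (T.filter fun e => src e = v).card = (T.filter fun e => tgt e = v).card) →
    T = ∅

/-- Let `f₁ ≠ f₂` be two edges both with head `v` or both with tail `v`. Let
`r₁ ≠ f₁` share a tail or a head with `f₁`, and `r₂ ≠ f₂` share a tail or a head
with `f₂`. Then in every path-2-coloring `χ`, `r₁` and `r₂` get different
colors. -/
theorem stmt8 {E V : Type*} [Fintype E] [DecidableEq E] [DecidableEq V]
    (src tgt : E → V) (v : V) (f₁ f₂ r₁ r₂ : E)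
    (hf : f₁ ≠ f₂)
    (hv : (tgt f₁ = v ∧ tgt f₂ = v) ∨ (src f₁ = v ∧ src f₂ = v))
    (h₁ : r₁ ≠ f₁) (h₁' : src r₁ = src f₁ ∨ tgt r₁ = tgt f₁)
    (h₂ : r₂ ≠ f₂) (h₂' : src r₂ = src f₂ ∨ tgt r₂ = tgt f₂) :
    ∀ χ : E → Bool, IsPath2ColoringGen src tgt χ → χ r₁ ≠ χ r₂ := by
  rintro χ ⟨hs, ht, -⟩
  have key : ∀ (e₁ e₂ : E), e₁ ≠ e₂ →
      (src e₁ = src e₂ ∨ tgt e₁ = tgt e₂) → χ e₁ ≠ χ e₂ := by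
    intro e₁ e₂ hne hshare heq
    rcases hshare with h | h
    · exact hne (Finset.card_le_one.mp (hs (χ e₂) (src e₂))
        e₁ (by simp [Finset.mem_filter, heq, h]) e₂ (by simp [Finset.mem_filter]))
    · exact hne (Finset.card_le_one.mp (ht (χ e₂) (tgt e₂))
        e₁ (by simp [Finset.mem_filter, heq, h]) e₂ (by simp [Finset.mem_filter]))
  have hf12 : χ f₁ ≠ χ f₂ := by
    rcases hv with ⟨a, b⟩ | ⟨a, b⟩
    · exact key f₁ f₂ hf (Or.inr (a.trans b.symm))
    · exact key f₁ f₂ hf (Or.inl (a.trans b.symm))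
  have h1 := key r₁ f₁ h₁ h₁'
  have h2 := key r₂ f₂ h₂ h₂'
  intro h
  revert hf12 h1 h2 h
  cases χ r₁ <;> cases χ r₂ <;> cases χ f₁ <;> cases χ f₂ <;> simp
end

section
/- Let G be the complete directed graph on a finite vertex set V with |V| = n ≥ 3, with edge weights w : E → {1,2}, and define complementary weights w'(e) = 2 − w(e) ∈ {0,1}. Let 0 ≤ α ≤ 1 and let T be a Hamiltonian cycle of G with w'(T) ≥ (1 − α) · max_{T'} w'(T'), where the maximum is over all Hamiltonian cycles T' of G. Then w(T) ≤ (1 + α) · min_{T'} w(T'), where the minimum is over all Hamiltonian cycles T' of G. -/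
open Finset

lemma ham_facts {V : Type*} [Fintype V] [DecidableEq V] {T : Finset (V × V)}
    (hT : IsHamCycle T) :
    T.card = Fintype.card V ∧ ∀ e ∈ T, e.1 ≠ e.2 := by
  obtain ⟨σ, hc, hs, rfl⟩ := hT
  constructor
  · rw [Finset.card_image_of_injective _ (fun a b h => (Prod.mk.injEq _ _ _ _ ▸ h).1)]
    exact Finset.card_univ
  · intro e he
    simp only [Finset.mem_image, Finset.mem_univ, true_and] at he
    obtain ⟨v, rfl⟩ := he
    have : v ∈ σ.support := hs ▸ Finset.mem_univ v
    exact fun h => (Equiv.Perm.mem_support.mp this) h.symm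

lemma ham_bounds {V : Type*} [Fintype V] [DecidableEq V] {T : Finset (V × V)}
    (hT : IsHamCycle T) (w : V × V → ℕ)
    (hw : ∀ u v : V, u ≠ v → w (u, v) = 1 ∨ w (u, v) = 2) :
    (Fintype.card V : ℚ) ≤ ∑ e ∈ T, (w e : ℚ) ∧
      ∑ e ∈ T, ((2 : ℚ) - w e) = 2 * Fintype.card V - ∑ e ∈ T, (w e : ℚ) := by
  obtain ⟨hcard, hne⟩ := ham_facts hT
  constructor
  · calc (Fintype.card V : ℚ) = ∑ _e ∈ T, (1 : ℚ) := by simp [hcard]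
      _ ≤ ∑ e ∈ T, (w e : ℚ) := by
        apply Finset.sum_le_sum
        intro e he
        rcases hw e.1 e.2 (hne e he) with h | h <;> simp_all
  · rw [Finset.sum_sub_distrib, Finset.sum_const, hcard]
    ring
  
/-- Vishvanathan's reduction: for the complete directed graph on `n ≥ 3` vertices
with weights `w : E → {1,2}` and complementary weights `w' e = 2 − w e ∈ {0,1}`,
if a Hamiltonian cycle `T` satisfies `w'(T) ≥ (1−α)·max w'(T')`, then
`w(T) ≤ (1+α)·min w(T')` (max/min over Hamiltonian cycles `T'`). -/
theorem stmt9 {V : Type*} [Fintype V] [DecidableEq V]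
    (h3 : 3 ≤ Fintype.card V)
    (w : V × V → ℕ) (hw : ∀ u v : V, u ≠ v → w (u, v) = 1 ∨ w (u, v) = 2)
    (α : ℚ) (hα0 : 0 ≤ α) (hα1 : α ≤ 1)
    (T : Finset (V × V)) (hT : IsHamCycle T)
    (happ : ∀ T' : Finset (V × V), IsHamCycle T' →
      (1 - α) * ∑ e ∈ T', ((2 : ℚ) - w e) ≤ ∑ e ∈ T, ((2 : ℚ) - w e)) :
    ∀ T' : Finset (V × V), IsHamCycle T' →
      (∑ e ∈ T, (w e : ℚ)) ≤ (1 + α) * ∑ e ∈ T', (w e : ℚ) := by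
  intro T' hT'
  obtain ⟨hx, hTc⟩ := ham_bounds hT w hw
  obtain ⟨hy, hTc'⟩ := ham_bounds hT' w hw
  have h := happ T' hT'
  rw [hTc, hTc'] at h
  nlinarith [mul_nonneg hα0 (sub_nonneg.mpr hy)]
end

section
/- Let c be a directed cycle of length ℓ ≥ 3 on a vertex set S in the complete directed graph on a finite vertex set V, and let M be a matching of the complete directed graph. Let i be the number of edges of M that are inrays of c, o the number of edges of M that are outrays of c, and ch the number of edges of M that are chords of c. Then o + i + 2·ch ≤ ℓ; moreover, if o ≤ i, then (a) o + ch ≤ ℓ − 2, and (b) the number of edges (u,v) of c such that no inray of c in M has head v is at least o + ch. -/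
open Finset

/-- Counting claim for the flipping procedure: for a directed cycle `c` of length
`ℓ ≥ 3` on `S` and a matching `M`, with `i`, `o`, `ch` the numbers of edges of `M`
that are inrays, outrays, and chords of `c` respectively: `o + i + 2·ch ≤ ℓ`, and
if `o ≤ i` then `o + ch ≤ ℓ − 2` and the number of edges `(u,v)` of `c` whose
head `v` is hit by no inray of `c` in `M` is at least `o + ch`. -/
theorem stmt12 {V : Type*} [Fintype V] [DecidableEq V]
    (S : Finset V) (c : Finset (V × V)) (ℓ : ℕ)
    (hc : IsCycleOn c S) (hlen : S.card = ℓ) (h3 : 3 ≤ ℓ)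
    (M : Finset (V × V)) (hM : IsMatching M)
    (i o ch : ℕ)
    (hi : i = (M.filter fun e => e.1 ∉ S ∧ e.2 ∈ S).card)
    (ho : o = (M.filter fun e => e.1 ∈ S ∧ e.2 ∉ S).card)
    (hch : ch = (M.filter fun e => e.1 ∈ S ∧ e.2 ∈ S ∧ e ∉ c).card) :
    o + i + 2 * ch ≤ ℓ ∧
    (o ≤ i →
      o + ch ≤ ℓ - 2 ∧
      o + ch ≤ (c.filter fun e =>
        ∀ m ∈ M, (m.1 ∉ S ∧ m.2 ∈ S) → m.2 ≠ e.2).card) := by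
  classical
  obtain ⟨σ, hcyc, hsupp, hceq⟩ := hc
  have hccard : c.card = ℓ := by
    rw [hceq, Finset.card_image_of_injective _ (fun a b h => congrArg Prod.fst h), hlen]
  -- main inequality
  set O := M.filter (fun e => e.1 ∈ S ∧ e.2 ∉ S) with hOdef
  set I := M.filter (fun e => e.1 ∉ S ∧ e.2 ∈ S) with hIdef
  set Ch := M.filter (fun e => e.1 ∈ S ∧ e.2 ∈ S ∧ e ∉ c) with hChdef
  have hdisjOI : Disjoint O I := by
    simp only [Finset.disjoint_left, hOdef, hIdef, Finset.mem_filter]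
    tauto
  have hdisjOICh : Disjoint (O ∪ I) Ch := by
    simp only [Finset.disjoint_left, hOdef, hIdef, hChdef, Finset.mem_union,
      Finset.mem_filter]
    tauto
  have hsumle : ∑ e ∈ M, (({e.1, e.2} : Finset V) ∩ S).card ≤ ℓ := by
    rw [← hlen, ← Finset.card_biUnion]
    · apply Finset.card_le_card
      intro x hx
      simp only [Finset.mem_biUnion, Finset.mem_inter] at hx
      obtain ⟨e, _, _, hxS⟩ := hx
      exact hxS
    · intro e he f hf hne
      obtain ⟨h1, h2, h3', h4⟩ := hM.2 e he f hf hne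
      simp only [Finset.disjoint_left, Finset.mem_inter, Finset.mem_insert,
        Finset.mem_singleton]
      rintro x ⟨hx1, _⟩ ⟨hx2, _⟩
      rcases hx1 with rfl | rfl <;> rcases hx2 with h | h <;> tauto
  have hkey : o + i + 2 * ch ≤ ℓ := by
    have hO1 : ∑ e ∈ O, (({e.1, e.2} : Finset V) ∩ S).card = O.card := by
      rw [Finset.card_eq_sum_ones O]
      apply Finset.sum_congr rfl
      intro e he
      simp only [hOdef, Finset.mem_filter] at he
      obtain ⟨_, h1, h2⟩ := he
      have : ({e.1, e.2} : Finset V) ∩ S = {e.1} := by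
        ext x
        simp only [Finset.mem_inter, Finset.mem_insert, Finset.mem_singleton]
        constructor
        · rintro ⟨rfl | rfl, hx⟩
          · rfl
          · exact absurd hx h2
        · rintro rfl; exact ⟨Or.inl rfl, h1⟩
      rw [this, Finset.card_singleton]
    have hI1 : ∑ e ∈ I, (({e.1, e.2} : Finset V) ∩ S).card = I.card := by
      rw [Finset.card_eq_sum_ones I]
      apply Finset.sum_congr rfl
      intro e he
      simp only [hIdef, Finset.mem_filter] at he
      obtain ⟨_, h1, h2⟩ := he
      have : ({e.1, e.2} : Finset V) ∩ S = {e.2} := by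
        ext x
        simp only [Finset.mem_inter, Finset.mem_insert, Finset.mem_singleton]
        constructor
        · rintro ⟨rfl | rfl, hx⟩
          · exact absurd hx h1
          · rfl
        · rintro rfl; exact ⟨Or.inr rfl, h2⟩
      rw [this, Finset.card_singleton]
    have hCh2 : ∑ e ∈ Ch, (({e.1, e.2} : Finset V) ∩ S).card = 2 * Ch.card := by
      rw [Nat.mul_comm 2 Ch.card, ← smul_eq_mul, ← Finset.sum_const]
      apply Finset.sum_congr rfl
      intro e he
      simp only [hChdef, Finset.mem_filter] at he
      obtain ⟨heM, h1, h2, _⟩ := he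
      have hne := hM.1 e heM
      have : ({e.1, e.2} : Finset V) ∩ S = {e.1, e.2} := by
        ext x
        simp only [Finset.mem_inter, Finset.mem_insert, Finset.mem_singleton]
        constructor
        · exact fun h => h.1
        · rintro (rfl | rfl)
          · exact ⟨Or.inl rfl, h1⟩
          · exact ⟨Or.inr rfl, h2⟩
      rw [this, Finset.card_insert_of_notMem (by simpa using hne),
        Finset.card_singleton]
    have hsub : O ∪ I ∪ Ch ⊆ M := by
      simp only [hOdef, hIdef, hChdef]
      intro e he
      simp only [Finset.mem_union, Finset.mem_filter] at he
      tauto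
    calc o + i + 2 * ch = O.card + I.card + 2 * Ch.card := by rw [ho, hi, hch]
      _ = ∑ e ∈ O ∪ I ∪ Ch, (({e.1, e.2} : Finset V) ∩ S).card := by
          rw [Finset.sum_union hdisjOICh, Finset.sum_union hdisjOI, hO1, hI1, hCh2]
      _ ≤ ∑ e ∈ M, (({e.1, e.2} : Finset V) ∩ S).card :=
          Finset.sum_le_sum_of_subset hsub
      _ ≤ ℓ := hsumle
  refine ⟨hkey, fun hoi => ?_⟩
  -- second part: count of unhit edges
  have hhit : (c.filter fun e => ¬ ∀ m ∈ M, (m.1 ∉ S ∧ m.2 ∈ S) → m.2 ≠ e.2).card ≤ i := by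
    have hsub : (c.filter fun e => ¬ ∀ m ∈ M, (m.1 ∉ S ∧ m.2 ∈ S) → m.2 ≠ e.2)
        ⊆ I.image fun m => (σ⁻¹ m.2, m.2) := by
      intro e he
      simp only [Finset.mem_filter] at he
      obtain ⟨hec, hm⟩ := he
      push_neg at hm
      obtain ⟨m, hmM, hmin, heq⟩ := hm
      rw [Finset.mem_image]
      refine ⟨m, Finset.mem_filter.mpr ⟨hmM, hmin⟩, ?_⟩
      rw [hceq, Finset.mem_image] at hec
      obtain ⟨v, hv, rfl⟩ := hec
      simp [heq]
    calc _ ≤ (I.image fun m => (σ⁻¹ m.2, m.2)).card := Finset.card_le_card hsub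
      _ ≤ I.card := Finset.card_image_le
      _ = i := hi.symm
  have hsplit := Finset.card_filter_add_card_filter_not
    (s := c) (p := fun e => ∀ m ∈ M, (m.1 ∉ S ∧ m.2 ∈ S) → m.2 ≠ e.2)
  rw [hccard] at hsplit
  constructor
  · omega
  · omega
end
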